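/- arXiv:1409.4508 — 3 statements merged into one kernel-verified Lean document; each statement's English description precedes it below -/
import Mathlib

section
/- Let d ≥ 1, n ≥ 2, and let c_1, …, c_n be points of d-dimensional Euclidean space satisfying ‖c_j − c_k‖ ≥ 2 for all 1 ≤ j < k ≤ n. Then 2(n − 1) ≤ Σ_{i=1}^n ‖c_i‖². -/
/-!
Expanding `‖c j - c k‖² = ‖c j‖² + ‖c k‖² - 2⟪c j, c k⟫` and summing over all ordered pairs gives
`∑ⱼ ∑ₖ ‖c j - c k‖² = 2n ∑ ‖c i‖² - 2 ‖∑ c i‖² ≤ 2n ∑ ‖c i‖²`, while the separation bounds each of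
the `n(n - 1)` off-diagonal terms from below by `r²`.
-/

open Finset

variable {E : Type*} {ι : Type*} [Fintype ι]

theorem sum_sum_norm_sub_sq [NormedAddCommGroup E] [InnerProductSpace ℝ E] (c : ι → E) :
    ∑ j, ∑ k, ‖c j - c k‖ ^ 2
      = 2 * Fintype.card ι * ∑ i, ‖c i‖ ^ 2 - 2 * ‖∑ i, c i‖ ^ 2 := by
  have norm_sum_sq : ‖∑ i, c i‖ ^ 2 = ∑ j, ∑ k, inner ℝ (c j) (c k) := by
    rw [← real_inner_self_eq_norm_sq, sum_inner]
    simp only [inner_sum]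
  simp only [norm_sub_sq_real, sum_sub_distrib, sum_add_distrib, sum_const, card_univ,
    nsmul_eq_mul, ← mul_sum, norm_sum_sq]
  ring

theorem card_sub_one_mul_sq_le_sum_norm_sub_sq [SeminormedAddCommGroup E] [DecidableEq ι]
    {c : ι → E} {r : ℝ} (hr : 0 ≤ r) (hc : Pairwise fun j k => r ≤ ‖c j - c k‖) (j : ι) :
    ((Fintype.card ι : ℝ) - 1) * r ^ 2 ≤ ∑ k, ‖c j - c k‖ ^ 2 := by
  have hcard : ((univ.erase j).card : ℝ) = Fintype.card ι - 1 := by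
    rw [card_erase_of_mem (mem_univ j), Nat.cast_sub (card_pos.mpr ⟨j, mem_univ j⟩)]
    simp
  calc ((Fintype.card ι : ℝ) - 1) * r ^ 2 = (univ.erase j).card • r ^ 2 := by
        rw [nsmul_eq_mul, hcard]
    _ ≤ ∑ k ∈ univ.erase j, ‖c j - c k‖ ^ 2 :=
        card_nsmul_le_sum _ _ _ fun k hk =>
          pow_le_pow_left₀ hr (hc (ne_of_mem_erase hk).symm) 2
    _ = ∑ k, ‖c j - c k‖ ^ 2 := by
        rw [← add_sum_erase _ _ (mem_univ j), sub_self, norm_zero]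
        ring

theorem sq_mul_card_sub_one_le_two_mul_sum_norm_sq [NormedAddCommGroup E]
    [InnerProductSpace ℝ E] {c : ι → E} {r : ℝ} (hr : 0 ≤ r)
    (hc : Pairwise fun j k => r ≤ ‖c j - c k‖) :
    r ^ 2 * ((Fintype.card ι : ℝ) - 1) ≤ 2 * ∑ i, ‖c i‖ ^ 2 := by
  classical
  rcases isEmpty_or_nonempty ι with hι | hι
  · simp [sq_nonneg]
  have hn : (0 : ℝ) < Fintype.card ι := by exact_mod_cast Fintype.card_pos
  have pairs_lower : Fintype.card ι * (((Fintype.card ι : ℝ) - 1) * r ^ 2)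
      ≤ ∑ j, ∑ k, ‖c j - c k‖ ^ 2 := by
    have := sum_le_sum fun j (_ : j ∈ univ) => card_sub_one_mul_sq_le_sum_norm_sub_sq hr hc j
    rwa [sum_const, card_univ, nsmul_eq_mul] at this
  rw [sum_sum_norm_sub_sq] at pairs_lower
  nlinarith [sq_nonneg ‖∑ i, c i‖]

theorem blichfeldt_sum_norm_sq_general (d n : ℕ)
    (c : Fin n → EuclideanSpace ℝ (Fin d))
    (hc : ∀ j k : Fin n, j < k → 2 ≤ ‖c j - c k‖) :
    2 * ((n : ℝ) - 1) ≤ ∑ i : Fin n, ‖c i‖ ^ 2 := by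
  have hsep : Pairwise fun j k => 2 ≤ ‖c j - c k‖ := fun j k hjk => by
    rcases hjk.lt_or_gt with hlt | hgt
    · exact hc j k hlt
    · exact norm_sub_rev (c j) (c k) ▸ hc k j hgt
  have := sq_mul_card_sub_one_le_two_mul_sum_norm_sq zero_le_two hsep
  rw [Fintype.card_fin] at this
  linarith

/-- If `c 1, …, c n` (`n ≥ 2`) are points of `d`-dimensional Euclidean space (`d ≥ 1`) with
pairwise distances at least `2`, then `2(n-1) ≤ ∑ ‖c i‖²`. -/
theorem blichfeldt_sum_norm_sq (d n : ℕ) (hd : 1 ≤ d) (hn : 2 ≤ n)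
    (c : Fin n → EuclideanSpace ℝ (Fin d))
    (hc : ∀ j k : Fin n, j < k → 2 ≤ ‖c j - c k‖) :
    2 * ((n : ℝ) - 1) ≤ ∑ i : Fin n, ‖c i‖ ^ 2 :=
  blichfeldt_sum_norm_sq_general d n c hc
end

section
/- Let d ≥ 1, λ > 0, set ℓ = 1 + λ, and let c_1, …, c_n be points of d-dimensional Euclidean space with ‖c_j − c_k‖ ≥ 2 for all j ≠ k. Then for every point y ∈ E^d, the sum over those indices i with ‖y − c_i‖ ≤ ℓ of the quantities (1 − ‖y − c_i‖²/2) is at most 1. Equivalently, Σ_{i=1}^n ρ_λ(y − c_i) ≤ 1, where ρ_λ is the Blichfeldt gauge function. -/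
/-!
Only the balls with `‖y - cᵢ‖ ≤ 1 + λ` contribute, and for these points `xᵢ = y - cᵢ`, which are
pairwise at distance at least `2`, the sum `∑ (1 - ‖xᵢ‖² / 2)` is at most `1`. Indeed, for `m`
points, `∑ᵢ∑ⱼ ‖xᵢ - xⱼ‖² = 2m ∑ ‖xᵢ‖² - 2 ‖∑ xᵢ‖² ≤ 2m ∑ ‖xᵢ‖²`, while the separation bounds the
left side below by `4m(m - 1)`; hence `∑ ‖xᵢ‖² ≥ 2(m - 1)`.
-/

open MeasureTheory Metric

/-- The Blichfeldt gauge function `ρ_λ`. -/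
noncomputable def blichfeldtGauge (d : ℕ) (lam : ℝ) (x : EuclideanSpace ℝ (Fin d)) : ℝ :=
  if ‖x‖ ≤ 1 + lam then 1 - ‖x‖ ^ 2 / 2 else 0

open Finset

section PairwiseSeparated

variable {ι E : Type*} {s : Finset ι} {x : ι → E}

theorem card_mul_card_sub_one_mul_sq_le_sum_sum_norm_sub_sq [SeminormedAddCommGroup E] {r : ℝ}
    (hx : (s : Set ι).Pairwise fun i j ↦ r ≤ ‖x i - x j‖) (hr : 0 ≤ r) :
    #s * (#s - 1) * r ^ 2 ≤ ∑ i ∈ s, ∑ j ∈ s, ‖x i - x j‖ ^ 2 := by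
  classical
  rw [mul_assoc, ← nsmul_eq_mul, ← sum_const]
  refine sum_le_sum fun i hi ↦ ?_
  calc (#s - 1 : ℝ) * r ^ 2 = ∑ _j ∈ s.erase i, r ^ 2 := by
        rw [sum_const, nsmul_eq_mul, cast_card_erase_of_mem hi]
    _ ≤ ∑ j ∈ s.erase i, ‖x i - x j‖ ^ 2 := by
        refine sum_le_sum fun j hj ↦ ?_
        have hij := hx hi (mem_of_mem_erase hj) (ne_of_mem_erase hj).symm
        gcongr
    _ ≤ ∑ j ∈ s, ‖x i - x j‖ ^ 2 :=
        sum_le_sum_of_subset_of_nonneg (erase_subset i s) fun _ _ _ ↦ by positivity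

variable [NormedAddCommGroup E] [InnerProductSpace ℝ E]

variable (s x) in
theorem sum_sum_norm_sub_sq_s1 :
    ∑ i ∈ s, ∑ j ∈ s, ‖x i - x j‖ ^ 2 = 2 * #s * ∑ i ∈ s, ‖x i‖ ^ 2 - 2 * ‖∑ i ∈ s, x i‖ ^ 2 := by
  simp only [norm_sub_sq_real, sum_add_distrib, sum_sub_distrib, sum_const, nsmul_eq_mul,
    ← mul_sum, ← inner_sum, ← sum_inner, real_inner_self_eq_norm_sq]
  ring

theorem card_sub_one_mul_sq_le_two_mul_sum_norm_sq {r : ℝ}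
    (hx : (s : Set ι).Pairwise fun i j ↦ r ≤ ‖x i - x j‖) (hr : 0 ≤ r) :
    (#s - 1) * r ^ 2 ≤ 2 * ∑ i ∈ s, ‖x i‖ ^ 2 := by
  rcases s.eq_empty_or_nonempty with rfl | hs
  · simpa using sq_nonneg r
  have hcard : (0 : ℝ) < #s := by exact_mod_cast hs.card_pos
  have hlower := card_mul_card_sub_one_mul_sq_le_sum_sum_norm_sub_sq hx hr
  rw [sum_sum_norm_sub_sq_s1] at hlower
  nlinarith [sq_nonneg ‖∑ i ∈ s, x i‖]

theorem sum_one_sub_norm_sq_div_two_le_one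
    (hx : (s : Set ι).Pairwise fun i j ↦ 2 ≤ ‖x i - x j‖) :
    ∑ i ∈ s, (1 - ‖x i‖ ^ 2 / 2) ≤ 1 := by
  have := card_sub_one_mul_sq_le_two_mul_sum_norm_sq hx zero_le_two
  rw [sum_sub_distrib, sum_const, nsmul_eq_mul, ← sum_div]
  linarith

end PairwiseSeparated

theorem sum_blichfeldtGauge_eq_sum_filter {d : ℕ} (lam : ℝ) {ι : Type*} (s : Finset ι)
    (x : ι → EuclideanSpace ℝ (Fin d)) :
    ∑ i ∈ s, blichfeldtGauge d lam (x i) =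
      ∑ i ∈ s with ‖x i‖ ≤ 1 + lam, (1 - ‖x i‖ ^ 2 / 2) := by
  rw [sum_filter]
  rfl

theorem blichfeldt_gauge_sum_le_one_general (d n : ℕ) (lam : ℝ)
    (c : Fin n → EuclideanSpace ℝ (Fin d))
    (hc : ∀ j k : Fin n, j ≠ k → 2 ≤ ‖c j - c k‖)
    (y : EuclideanSpace ℝ (Fin d)) :
    ∑ i : Fin n, blichfeldtGauge d lam (y - c i) ≤ 1 := by
  rw [sum_blichfeldtGauge_eq_sum_filter]
  refine sum_one_sub_norm_sq_div_two_le_one fun i _ j _ hij ↦ ?_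
  dsimp only
  rw [sub_sub_sub_cancel_left]
  exact hc j i hij.symm

/-- For a packing of unit balls with centers `c 1, …, c n` in `d`-dimensional Euclidean space
(`d ≥ 1`) and any point `y`, we have `∑ i, ρ_λ (y - c i) ≤ 1`, where `ρ_λ` is the
Blichfeldt gauge function and `λ > 0`. -/
theorem blichfeldt_gauge_sum_le_one (d n : ℕ) (hd : 1 ≤ d) (lam : ℝ) (hlam : 0 < lam)
    (c : Fin n → EuclideanSpace ℝ (Fin d))
    (hc : ∀ j k : Fin n, j ≠ k → 2 ≤ ‖c j - c k‖)
    (y : EuclideanSpace ℝ (Fin d)) :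
    ∑ i : Fin n, blichfeldtGauge d lam (y - c i) ≤ 1 :=
  blichfeldt_gauge_sum_le_one_general d n lam c hc y
end

section
/- Let d ≥ 2, let 0 < λ < 2/√3 − 1, and let c_1, …, c_n be points of E^d with ‖c_j − c_k‖ ≥ 2 for all j ≠ k. Then no point of E^d belongs to three of the closed balls of radius 1 + λ centered at the points c_i; that is, there is no point y ∈ E^d and distinct indices i, j, k with ‖y − c_i‖ ≤ 1 + λ, ‖y − c_j‖ ≤ 1 + λ and ‖y − c_k‖ ≤ 1 + λ. -/
open MeasureTheory Metric

/-! Three points that are pairwise at distance at least `2` cannot all lie within `r` of a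
common point unless `r ≥ 2 / √3`: the sum of the squared pairwise distances of three points is
at most three times the sum of their squared distances to any point `y` (with equality exactly
when `y` is their centroid). Since `1 + λ < 2 / √3`, no three of the enlarged balls meet. -/

section InnerProductSpace

variable {E : Type*} [NormedAddCommGroup E] [InnerProductSpace ℝ E]

theorem norm_sub_sq_add_norm_sub_sq_add_norm_sub_sq_add_norm_add_sq (u v w : E) :
    ‖u - v‖ ^ 2 + ‖u - w‖ ^ 2 + ‖v - w‖ ^ 2 + ‖u + v + w‖ ^ 2 =
      3 * (‖u‖ ^ 2 + ‖v‖ ^ 2 + ‖w‖ ^ 2) := by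
  simp only [norm_sub_sq_real, norm_add_sq_real, inner_add_left]
  ring

theorem norm_sub_sq_add_norm_sub_sq_add_norm_sub_sq_le (a b c y : E) :
    ‖a - b‖ ^ 2 + ‖a - c‖ ^ 2 + ‖b - c‖ ^ 2 ≤
      3 * (‖y - a‖ ^ 2 + ‖y - b‖ ^ 2 + ‖y - c‖ ^ 2) := by
  have key := norm_sub_sq_add_norm_sub_sq_add_norm_sub_sq_add_norm_add_sq (y - a) (y - b) (y - c)
  simp only [sub_sub_sub_cancel_left] at key
  rw [norm_sub_rev b a, norm_sub_rev c a, norm_sub_rev c b] at key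
  linarith [sq_nonneg ‖y - a + (y - b) + (y - c)‖]

theorem sq_le_three_mul_sq_of_le_norm_sub {a b c y : E} {s r : ℝ} (hs : 0 ≤ s)
    (hab : s ≤ ‖a - b‖) (hac : s ≤ ‖a - c‖) (hbc : s ≤ ‖b - c‖)
    (ha : ‖y - a‖ ≤ r) (hb : ‖y - b‖ ≤ r) (hc : ‖y - c‖ ≤ r) :
    s ^ 2 ≤ 3 * r ^ 2 := by
  have hsq {x t : ℝ} (h0 : 0 ≤ x) (h : x ≤ t) : x ^ 2 ≤ t ^ 2 := pow_le_pow_left₀ h0 h 2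
  have := norm_sub_sq_add_norm_sub_sq_add_norm_sub_sq_le a b c y
  linarith [hsq hs hab, hsq hs hac, hsq hs hbc, hsq (norm_nonneg _) ha,
    hsq (norm_nonneg _) hb, hsq (norm_nonneg _) hc]

end InnerProductSpace

theorem three_mul_sq_lt_four {r : ℝ} (hr0 : 0 ≤ r) (hr : r < 2 / Real.sqrt 3) :
    3 * r ^ 2 < 4 := by
  have h3 : Real.sqrt 3 ^ 2 = 3 := Real.sq_sqrt (by norm_num)
  have hr' : r * Real.sqrt 3 < 2 := (lt_div_iff₀ (by positivity)).mp hr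
  nlinarith [mul_nonneg hr0 (Real.sqrt_nonneg 3)]

theorem no_triple_intersection_general (d : ℕ) (lam : ℝ)
    (hlam1 : lam < 2 / Real.sqrt 3 - 1)
    (n : ℕ) (c : Fin n → EuclideanSpace ℝ (Fin d))
    (hc : ∀ j k : Fin n, j ≠ k → 2 ≤ ‖c j - c k‖) :
    ¬ ∃ (y : EuclideanSpace ℝ (Fin d)) (i j k : Fin n),
      i ≠ j ∧ i ≠ k ∧ j ≠ k ∧
      ‖y - c i‖ ≤ 1 + lam ∧ ‖y - c j‖ ≤ 1 + lam ∧ ‖y - c k‖ ≤ 1 + lam := by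
  rintro ⟨y, i, j, k, hij, hik, hjk, hi, hj, hk⟩
  have hfour : (2 : ℝ) ^ 2 ≤ 3 * (1 + lam) ^ 2 :=
    sq_le_three_mul_sq_of_le_norm_sub zero_le_two (hc i j hij) (hc i k hik) (hc j k hjk) hi hj hk
  have hlt : 3 * (1 + lam) ^ 2 < 4 :=
    three_mul_sq_lt_four ((norm_nonneg _).trans hi) (by linarith)
  linarith

/-- For `d ≥ 2`, `0 < λ < 2/√3 - 1`, and a packing of unit balls in `E^d` with centers
`c 1, …, c n`, no point of `E^d` belongs to three of the closed balls of radius `1 + λ`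
centered at the points `c i`. -/
theorem no_triple_intersection (d : ℕ) (hd : 2 ≤ d) (lam : ℝ) (hlam0 : 0 < lam)
    (hlam1 : lam < 2 / Real.sqrt 3 - 1)
    (n : ℕ) (c : Fin n → EuclideanSpace ℝ (Fin d))
    (hc : ∀ j k : Fin n, j ≠ k → 2 ≤ ‖c j - c k‖) :
    ¬ ∃ (y : EuclideanSpace ℝ (Fin d)) (i j k : Fin n),
      i ≠ j ∧ i ≠ k ∧ j ≠ k ∧
      ‖y - c i‖ ≤ 1 + lam ∧ ‖y - c j‖ ≤ 1 + lam ∧ ‖y - c k‖ ≤ 1 + lam :=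
  no_triple_intersection_general d lam hlam1 n c hc
end
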